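/- arXiv:1508.04205 — 5 statements merged into one kernel-verified Lean document; each statement's English description precedes it below -/
import Mathlib

section
/- Let n ≥ 1 and let P(z) = (P¹(z), …, P^q(z)) be a polynomial mapping in z = (z¹, …, zⁿ) ∈ ℂⁿ. Suppose there is a Hermitian polynomial A(z, z̄) such that ‖P(z)‖² = A(z, z̄)·‖z‖² for all z ∈ ℂⁿ. If the linear rank r of P satisfies r < n, then A is identically zero and P is identically zero (so r = 0). (Huang's Lemma, the first gap of the SOS Conjecture.) -/
open scoped BigOperators

noncomputable section

/-- The value at `z ∈ ℂⁿ` of the Hermitian polynomial `A(z, z̄) = Σ_{μ,ν} c_{μν} z^μ z̄^ν`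
determined by the finitely supported coefficient function `c` on pairs of multi-indices. -/
def hermEval {n : ℕ} (c : ((Fin n →₀ ℕ) × (Fin n →₀ ℕ)) →₀ ℂ) (z : Fin n → ℂ) : ℂ :=
  c.sum fun p a => a * (∏ i, z i ^ p.1 i) * ∏ i, (starRingEnd ℂ) (z i) ^ p.2 i

/-!
Polarizing `‖P(z)‖² = A(z, z̄) ‖z‖²` gives `⟪P(z), P(w)⟫ = ⟪z, w⟫ B(z, w)` for all `z, w`, so `P`
maps `uᗮ` into `P(u)ᗮ`. Restricted to `uᗮ` with `P(u) ≠ 0`, the map `P` satisfies the same kind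
of identity while the dimension drops by one and the rank of the span of its values drops by at
least one, so by induction on the dimension `P` vanishes on `uᗮ` whenever `P(u) ≠ 0`. If
`P(z₁) ≠ 0`, the hyperplanes `uᗮ` with `u` near `z₁` cover an open set, on which the analytic map
`P` then vanishes: a contradiction. Finally `A = ‖P‖² / ‖z‖² = 0` off the origin, hence everywhere
by continuity.
-/

open MvPolynomial ComplexConjugate Submodule Module Set Filter Topology
open scoped InnerProductSpace

namespace MvPolynomial

theorem eval_bind₁ {σ τ R : Type*} [CommSemiring R] (g : τ → R) (h : σ → MvPolynomial τ R)
    (p : MvPolynomial σ R) : eval g (bind₁ h p) = eval (fun i => eval g (h i)) p :=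
  eval₂Hom_bind₁ _ _ _ _

theorem eq_zero_of_eval_ofReal_eq_zero {σ : Type*} {p : MvPolynomial σ ℂ}
    (h : ∀ x : σ → ℝ, eval (fun i => (x i : ℂ)) p = 0) : p = 0 := by
  refine funext_set (fun _ => Set.range Complex.ofReal)
    (fun _ => Set.infinite_range_of_injective Complex.ofReal_injective) fun z hz => ?_
  choose x hx using fun i => hz i trivial
  rw [← _root_.funext hx, h, map_zero]

theorem eq_zero_of_eval_conj_eq_zero {σ : Type*} {p : MvPolynomial (σ ⊕ σ) ℂ}
    (h : ∀ z : σ → ℂ, eval (Sum.elim z (conj ∘ z)) p = 0) : p = 0 := by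
  -- Under `z = x + i y`, `ζ = x - i y` the diagonal `ζ = z̄` becomes the real points `(x, y)`.
  set L : σ ⊕ σ → MvPolynomial (σ ⊕ σ) ℂ :=
    Sum.elim (fun i => X (.inl i) + C Complex.I * X (.inr i))
      (fun i => X (.inl i) - C Complex.I * X (.inr i))
  have hL : bind₁ L p = 0 := by
    refine eq_zero_of_eval_ofReal_eq_zero fun x => ?_
    rw [eval_bind₁]
    convert h fun i => x (.inl i) + Complex.I * x (.inr i) using 3
    refine _root_.funext fun j => ?_
    rcases j with i | i <;> simp [L, Complex.conj_ofReal, sub_eq_add_neg]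
  refine funext fun a => ?_
  have := congrArg (eval (Sum.elim (fun i => (a (.inl i) + a (.inr i)) / 2)
    (fun i => (a (.inl i) - a (.inr i)) / (2 * Complex.I)))) hL
  rw [eval_bind₁, map_zero] at this
  rw [map_zero, ← this]
  congr 2
  refine _root_.funext fun j => ?_
  rcases j with i | i <;> simp [L] <;> field_simp <;> ring

end MvPolynomial

def hermPoly {σ : Type*} [Fintype σ] (c : ((σ →₀ ℕ) × (σ →₀ ℕ)) →₀ ℂ) :
    MvPolynomial (σ ⊕ σ) ℂ :=
  c.sum fun p a => C a * (∏ i, X (.inl i) ^ p.1 i) * ∏ i, X (.inr i) ^ p.2 i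

theorem hermEval_eq_eval_hermPoly {n : ℕ} (c : ((Fin n →₀ ℕ) × (Fin n →₀ ℕ)) →₀ ℂ)
    (z : Fin n → ℂ) : hermEval c z = eval (Sum.elim z (conj ∘ z)) (hermPoly c) := by
  simp [hermPoly, hermEval, Finsupp.sum, map_prod]

theorem sum_conj_mul_self_eq_sum_normSq {ι : Type*} (s : Finset ι) (f : ι → ℂ) :
    ∑ i ∈ s, conj (f i) * f i = ((∑ i ∈ s, Complex.normSq (f i) : ℝ) : ℂ) := by
  push_cast
  exact Finset.sum_congr rfl fun i _ => by rw [mul_comm, Complex.mul_conj]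

-- Both sides are polynomials in `(w, z̄)` that agree on the diagonal `w = z`.
theorem sum_conj_eval_mul_eval_eq {n q : ℕ} (P : Fin q → MvPolynomial (Fin n) ℂ)
    (c : ((Fin n →₀ ℕ) × (Fin n →₀ ℕ)) →₀ ℂ)
    (heq : ∀ z : Fin n → ℂ,
      ((∑ k, Complex.normSq (eval z (P k)) : ℝ) : ℂ) =
        hermEval c z * ((∑ i, Complex.normSq (z i) : ℝ) : ℂ))
    (z w : Fin n → ℂ) :
    ∑ k, conj (eval z (P k)) * eval w (P k) =
      (∑ i, conj (z i) * w i) * eval (Sum.elim w (conj ∘ z)) (hermPoly c) := by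
  have eval_map_conj : ∀ (x : Fin n → ℂ) (p : MvPolynomial (Fin n) ℂ),
      eval (conj ∘ x) (map conj p) = conj (eval x p) := fun x p => by
    rw [eval_map, eval₂_comp]
  set H : MvPolynomial (Fin n ⊕ Fin n) ℂ :=
    ∑ k, rename .inl (P k) * rename .inr (map conj (P k)) -
      (∑ i, X (.inl i) * X (.inr i)) * hermPoly c
  have eval_H : ∀ a x : Fin n → ℂ, eval (Sum.elim a (conj ∘ x)) H =
      ∑ k, eval a (P k) * conj (eval x (P k)) -
        (∑ i, a i * conj (x i)) * eval (Sum.elim a (conj ∘ x)) (hermPoly c) := by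
    intro a x
    simp [H, eval_rename, eval_map_conj]
  have hH : H = 0 := eq_zero_of_eval_conj_eq_zero fun x => by
    simp only [eval_H, mul_comm (eval x _), mul_comm (x _), sum_conj_mul_self_eq_sum_normSq, heq,
      hermEval_eq_eval_hermPoly]
    ring
  have := eval_H w z
  rw [hH, map_zero, eq_comm, sub_eq_zero] at this
  simpa only [mul_comm] using this

theorem finrank_span_range_dual_apply_le {K M ι Z : Type*} [Field K] [AddCommGroup M]
    [Module K M] [Finite ι] (v : ι → M) (φ : Z → Module.Dual K M) :
    finrank K (span K (range fun z k => φ z (v k))) ≤ finrank K (span K (range v)) := by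
  set V := span K (range v)
  have : FiniteDimensional K V := FiniteDimensional.span_of_finite K (finite_range v)
  let Θ : Module.Dual K V →ₗ[K] ι → K :=
    LinearMap.pi fun k => Module.Dual.eval K V ⟨v k, subset_span ⟨k, rfl⟩⟩
  calc _ ≤ finrank K (LinearMap.range Θ) := by
        refine Submodule.finrank_mono (span_le.2 ?_)
        rintro _ ⟨z, rfl⟩
        exact ⟨(φ z).comp V.subtype, rfl⟩
    _ ≤ finrank K (Module.Dual K V) := LinearMap.finrank_range_le Θ
    _ = finrank K V := Subspace.dual_finrank_eq

section InnerProductSpace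

variable {E F : Type*} [NormedAddCommGroup E] [InnerProductSpace ℂ E]
  [NormedAddCommGroup F] [InnerProductSpace ℂ F]

theorem eventually_exists_mem_mem_orthogonal {U : Set E} {z₁ x₀ : E} (hU : U ∈ 𝓝 z₁)
    (hx₀ : x₀ ≠ 0) (h : x₀ ∈ (ℂ ∙ z₁)ᗮ) : ∀ᶠ x in 𝓝 x₀, ∃ u ∈ U, x ∈ (ℂ ∙ u)ᗮ := by
  -- the projection of `z₁` to `xᗮ`, continuous near `x₀ ≠ 0`
  set u : E → E := fun x => z₁ - (⟪x, z₁⟫_ℂ / ⟪x, x⟫_ℂ) • x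
  have hu : Tendsto u (𝓝 x₀) (𝓝 z₁) := by
    have : ContinuousAt u x₀ := by
      have : ⟪x₀, x₀⟫_ℂ ≠ 0 := inner_self_ne_zero.2 hx₀
      fun_prop (disch := assumption)
    rw [mem_orthogonal_singleton_iff_inner_right, inner_eq_zero_symm] at h
    simpa [u, h] using this.tendsto
  filter_upwards [hu hU] with x hx
  refine ⟨u x, hx, ?_⟩
  rw [mem_orthogonal_singleton_iff_inner_right, inner_eq_zero_symm]
  rcases eq_or_ne x 0 with rfl | hx0
  · simp
  · simp [u, inner_sub_right, inner_smul_right, hx0]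

variable {f : E → F} {B : E → E → ℂ}

theorem finrank_span_range_comp_subtype_lt [FiniteDimensional ℂ F]
    (hB : ∀ z w, ⟪f z, f w⟫_ℂ = ⟪z, w⟫_ℂ * B z w) {u : E} (hu : f u ≠ 0) :
    finrank ℂ (span ℂ (range fun x : (ℂ ∙ u)ᗮ => f x)) < finrank ℂ (span ℂ (range f)) := by
  refine finrank_lt_finrank_of_lt (lt_of_le_of_lt (b := span ℂ (range f) ⊓ (ℂ ∙ f u)ᗮ) ?_ ?_)
  · rw [span_le]
    rintro _ ⟨x, rfl⟩
    refine ⟨subset_span ⟨x, rfl⟩, mem_orthogonal_singleton_iff_inner_right.2 ?_⟩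
    rw [hB, mem_orthogonal_singleton_iff_inner_right.1 x.2, zero_mul]
  · refine inf_lt_left.2 fun h => hu ?_
    exact inner_self_eq_zero.1
      (mem_orthogonal_singleton_iff_inner_right.1 (h (subset_span ⟨u, rfl⟩)))

theorem eq_zero_of_inner_eq_inner_mul [FiniteDimensional ℂ E] [FiniteDimensional ℂ F]
    (hf : AnalyticOnNhd ℂ f univ) (hB : ∀ z w, ⟪f z, f w⟫_ℂ = ⟪z, w⟫_ℂ * B z w)
    (hrank : finrank ℂ (span ℂ (range f)) < finrank ℂ E) : f = 0 := by
  induction hd : finrank ℂ E using Nat.strong_induction_on generalizing E with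
  | _ d IH =>
  by_contra hf0
  obtain ⟨z₁, hz₁⟩ := Function.ne_iff.1 hf0
  have finrank_orthogonal : ∀ u, f u ≠ 0 → finrank ℂ (ℂ ∙ u)ᗮ + 1 = d := by
    intro u hu
    have hu0 : u ≠ 0 := by
      rintro rfl
      exact hu (inner_self_eq_zero.1 (by rw [hB]; simp))
    rw [← hd, ← finrank_add_finrank_orthogonal (ℂ ∙ u), finrank_span_singleton hu0, add_comm]
  have vanish : ∀ u, f u ≠ 0 → ∀ x ∈ (ℂ ∙ u)ᗮ, f x = 0 := by
    intro u hu x hx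
    have hdim := finrank_orthogonal u hu
    have hlt := finrank_span_range_comp_subtype_lt hB hu
    have := IH _ (by omega) (f := fun x : (ℂ ∙ u)ᗮ => f x) (B := fun y w => B y w)
      (hf.comp ((ℂ ∙ u)ᗮ.subtypeL.analyticOnNhd univ) (mapsTo_univ _ _)) (fun y w => hB y w)
      (by omega) rfl
    exact congrFun this ⟨x, hx⟩
  have hrank_pos : 0 < finrank ℂ (span ℂ (range f)) :=
    finrank_pos_iff_exists_ne_zero.2 ⟨⟨f z₁, subset_span ⟨z₁, rfl⟩⟩, by simpa using hz₁⟩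
  obtain ⟨x₀, hx₀, hx₀0⟩ : ∃ x₀ ∈ (ℂ ∙ z₁)ᗮ, x₀ ≠ 0 := by
    refine exists_mem_ne_zero_of_ne_bot fun h => ?_
    have hdim := finrank_orthogonal z₁ hz₁
    rw [h, finrank_bot] at hdim
    omega
  have hU : {u | f u ≠ 0} ∈ 𝓝 z₁ :=
    (isOpen_ne_fun hf.continuous continuous_const).mem_nhds hz₁
  have hf_near : f =ᶠ[𝓝 x₀] 0 :=
    (eventually_exists_mem_mem_orthogonal hU hx₀0 hx₀).mono fun x ⟨u, hu, hxu⟩ =>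
      vanish u hu x hxu
  exact hz₁ (congrFun (hf.eq_of_eventuallyEq analyticOnNhd_const hf_near) z₁)

end InnerProductSpace

section PolyMap

variable {σ ι : Type*} [Fintype ι]

def polyMap (P : ι → MvPolynomial σ ℂ) (z : EuclideanSpace ℂ σ) : EuclideanSpace ℂ ι :=
  WithLp.toLp 2 fun k => eval z (P k)

theorem analyticOnNhd_polyMap [Fintype σ] (P : ι → MvPolynomial σ ℂ) :
    AnalyticOnNhd ℂ (polyMap P) univ :=
  ((EuclideanSpace.equiv ι ℂ).symm.toContinuousLinearMap.analyticOnNhd univ).comp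
    (AnalyticOnNhd.pi fun k => AnalyticOnNhd.eval_continuousLinearMap
      (EuclideanSpace.equiv σ ℂ).toContinuousLinearMap (P k)) (mapsTo_univ _ _)

theorem inner_polyMap (P : ι → MvPolynomial σ ℂ) (z w : EuclideanSpace ℂ σ) :
    ⟪polyMap P z, polyMap P w⟫_ℂ = ∑ k, conj (eval z (P k)) * eval w (P k) := by
  simp [polyMap, PiLp.inner_apply, mul_comm]

theorem finrank_span_range_polyMap_le (P : ι → MvPolynomial σ ℂ) :
    finrank ℂ (span ℂ (range (polyMap P))) ≤ finrank ℂ (span ℂ (range P)) := by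
  let φ : EuclideanSpace ℂ σ → Module.Dual ℂ (MvPolynomial σ ℂ) :=
    fun z => (aeval z.ofLp).toLinearMap
  have hrange : range (polyMap P) =
      (WithLp.linearEquiv 2 ℂ (ι → ℂ)).symm '' range fun z k => φ z (P k) := by
    rw [← range_comp]
    rfl
  rw [hrange, span_image_linearEquiv, LinearEquiv.finrank_map_eq]
  exact finrank_span_range_dual_apply_le P φ

end PolyMap

theorem continuous_hermEval {n : ℕ} (c : ((Fin n →₀ ℕ) × (Fin n →₀ ℕ)) →₀ ℂ) :
    Continuous (hermEval c) := by
  unfold hermEval Finsupp.sum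
  fun_prop

theorem huang_lemma_general {n q : ℕ}
    (P : Fin q → MvPolynomial (Fin n) ℂ)
    (c : ((Fin n →₀ ℕ) × (Fin n →₀ ℕ)) →₀ ℂ)
    (heq : ∀ z : Fin n → ℂ,
      ((∑ k, Complex.normSq (MvPolynomial.eval z (P k)) : ℝ) : ℂ) =
        hermEval c z * ((∑ i, Complex.normSq (z i) : ℝ) : ℂ))
    (hrank : Module.finrank ℂ (Submodule.span ℂ (Set.range P)) < n) :
    (∀ z : Fin n → ℂ, hermEval c z = 0) ∧ (∀ k, P k = 0) := by
  have hf : polyMap P = 0 := by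
    refine eq_zero_of_inner_eq_inner_mul (analyticOnNhd_polyMap P)
      (B := fun z w => eval (Sum.elim w (conj ∘ z)) (hermPoly c)) (fun z w => ?_) ?_
    · rw [inner_polyMap, sum_conj_eval_mul_eval_eq P c heq]
      simp [PiLp.inner_apply, mul_comm]
    · simpa using (finrank_span_range_polyMap_le P).trans_lt hrank
  have hP : ∀ k, P k = 0 := fun k => funext fun z => by
    simpa [polyMap] using congr(($hf (WithLp.toLp 2 z)) k)
  have hA : ∀ z ≠ 0, hermEval c z = 0 := fun z hz => by
    have hnorm : ((∑ i, Complex.normSq (z i) : ℝ) : ℂ) ≠ 0 := by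
      rw [Complex.ofReal_ne_zero, Ne,
        Finset.sum_eq_zero_iff_of_nonneg fun i _ => Complex.normSq_nonneg _]
      simpa [Complex.normSq_eq_zero, _root_.funext_iff] using hz
    have := heq z
    simp only [hP, map_zero, Finset.sum_const_zero, Complex.ofReal_zero] at this
    exact (mul_eq_zero.1 this.symm).resolve_right hnorm
  have : Nonempty (Fin n) := ⟨⟨0, by omega⟩⟩
  exact ⟨congrFun ((continuous_hermEval c).ext_on (dense_compl_singleton 0) continuous_const hA),
    hP⟩

/-- **Huang's Lemma** (the first gap of the SOS Conjecture).  Let `n ≥ 1` and let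
`P = (P¹, …, P^q)` be a polynomial mapping on `ℂⁿ`.  Suppose there is a Hermitian polynomial
`A(z, z̄)` with `‖P(z)‖² = A(z, z̄)·‖z‖²` for all `z ∈ ℂⁿ`.  If the linear rank of `P` is
less than `n`, then `A ≡ 0` and `P ≡ 0`. -/
theorem huang_lemma {n q : ℕ} (hn : 1 ≤ n)
    (P : Fin q → MvPolynomial (Fin n) ℂ)
    (c : ((Fin n →₀ ℕ) × (Fin n →₀ ℕ)) →₀ ℂ)
    (hherm : ∀ μ ν : Fin n →₀ ℕ, c (ν, μ) = (starRingEnd ℂ) (c (μ, ν)))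
    (heq : ∀ z : Fin n → ℂ,
      ((∑ k, Complex.normSq (MvPolynomial.eval z (P k)) : ℝ) : ℂ) =
        hermEval c z * ((∑ i, Complex.normSq (z i) : ℝ) : ℂ))
    (hrank : Module.finrank ℂ (Submodule.span ℂ (Set.range P)) < n) :
    (∀ z : Fin n → ℂ, hermEval c z = 0) ∧ (∀ k, P k = 0) :=
  huang_lemma_general P c heq hrank
end
end

section
/- Let F, G, P be polynomial mappings in z = (z¹, …, zⁿ) ∈ ℂⁿ such that ‖P(z)‖² = (‖F(z)‖² − ‖G(z)‖²)·‖z‖² for all z ∈ ℂⁿ, and let r denote the linear rank of P. Then dim_ℂ V_{F⊗z} − dim_ℂ V_{G⊗z} ≤ r ≤ dim_ℂ V_{F⊗z}. -/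
/-!
Since `‖F ⊗ z‖² = ‖F‖² ‖z‖²`, the hypothesis says `‖(P, G ⊗ z)‖² = ‖F ⊗ z‖²`. Two polynomial
maps `A`, `B` with `‖A(z)‖² = ‖B(z)‖²` have the same linear span: the identity polarizes to
`∑ Aₖ(z) conj (Aₖ(w)) = ∑ Bⱼ(z) conj (Bⱼ(w))` for all `z, w`, because `z` and `conj z` behave like
independent variables for polynomials. Hence `V_{F⊗z} = V_P + V_{G⊗z}`, and both bounds are
dimension counts.
-/

open MvPolynomial ComplexConjugate

namespace MvPolynomial

variable {σ ι κ : Type*}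

theorem eq_zero_of_eval_ofReal (q : MvPolynomial σ ℂ)
    (h : ∀ x : σ → ℝ, eval (fun i => (x i : ℂ)) q = 0) : q = 0 := by
  refine funext_set (fun _ => Set.range ((↑) : ℝ → ℂ))
    (fun _ => Set.infinite_range_of_injective Complex.ofReal_injective) fun z hz => ?_
  choose x hx using fun i => hz i trivial
  rw [map_zero, ← _root_.funext hx]
  exact h x

theorem conj_eval_eq_eval_map (Q : MvPolynomial σ ℂ) (w : σ → ℂ) :
    conj (eval w Q) = eval (fun i => conj (w i)) (map (starRingEnd ℂ) Q) := by
  rw [eval_map, ← eval₂_id, eval₂_comp_left]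
  rfl

/-- The substitution `s : (x, y) ↦ (x + i y, x - i y)` is invertible and sends real points to
points of the form `(z, conj z)`. -/
theorem eq_zero_of_eval_sumElim_conj (p : MvPolynomial (σ ⊕ σ) ℂ)
    (h : ∀ z : σ → ℂ, eval (Sum.elim z fun i => conj (z i)) p = 0) : p = 0 := by
  let s : σ ⊕ σ → MvPolynomial (σ ⊕ σ) ℂ :=
    Sum.elim (fun i => X (.inl i) + Complex.I • X (.inr i))
      (fun i => X (.inl i) - Complex.I • X (.inr i))
  let t : σ ⊕ σ → MvPolynomial (σ ⊕ σ) ℂ :=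
    Sum.elim (fun i => (2 : ℂ)⁻¹ • (X (.inl i) + X (.inr i)))
      (fun i => (-Complex.I / 2) • (X (.inl i) - X (.inr i)))
  have t_comp_s : ∀ j, bind₁ t (s j) = X j := by
    rintro (i | i) <;>
      simp only [s, t, Sum.elim_inl, Sum.elim_inr, map_add, map_sub, map_smul, bind₁_X_right]
    all_goals
      rw [smul_smul, show Complex.I * (-Complex.I / 2) = 2⁻¹ by
        linear_combination (-1 / 2 : ℂ) * Complex.I_mul_I]
      module
  have s_p : bind₁ s p = 0 := by
    refine eq_zero_of_eval_ofReal _ fun x => ?_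
    have s_real : (fun j => eval (fun i => (x i : ℂ)) (s j)) =
        Sum.elim (fun i => (x (.inl i) : ℂ) + Complex.I * x (.inr i))
          fun i => conj ((x (.inl i) : ℂ) + Complex.I * x (.inr i)) := by
      ext (i | i) <;> simp [s, Complex.conj_ofReal, sub_eq_add_neg]
    rw [eval, eval₂Hom_bind₁, ← eval]
    exact s_real ▸ h _
  calc p = bind₁ t (bind₁ s p) := by rw [bind₁_bind₁, _root_.funext t_comp_s, bind₁_X_left]; rfl
    _ = 0 := by rw [s_p, map_zero]

variable [Fintype ι] [Fintype κ]

/-- The polarization of `‖A(z)‖²`, the second block of variables standing for `conj z`. -/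
noncomputable def polarizedNormSq (A : ι → MvPolynomial σ ℂ) : MvPolynomial (σ ⊕ σ) ℂ :=
  ∑ k, rename Sum.inl (A k) * rename Sum.inr (map (starRingEnd ℂ) (A k))

theorem eval_polarizedNormSq (A : ι → MvPolynomial σ ℂ) (z w : σ → ℂ) :
    eval (Sum.elim z fun i => conj (w i)) (polarizedNormSq A) =
      ∑ k, eval z (A k) * conj (eval w (A k)) := by
  simp only [polarizedNormSq, map_sum, map_mul, eval_rename, Sum.elim_comp_inl,
    Sum.elim_comp_inr, conj_eval_eq_eval_map]

theorem sum_eval_mul_conj_eq_of_sum_normSq_eq (A : ι → MvPolynomial σ ℂ)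
    (B : κ → MvPolynomial σ ℂ)
    (h : ∀ z, ∑ k, Complex.normSq (eval z (A k)) = ∑ j, Complex.normSq (eval z (B j)))
    (z w : σ → ℂ) :
    ∑ k, eval z (A k) * conj (eval w (A k)) = ∑ j, eval z (B j) * conj (eval w (B j)) := by
  have : polarizedNormSq A = polarizedNormSq B := by
    refine sub_eq_zero.1 (eq_zero_of_eval_sumElim_conj _ fun z => ?_)
    rw [map_sub, eval_polarizedNormSq, eval_polarizedNormSq, sub_eq_zero]
    simp only [Complex.mul_conj]
    exact_mod_cast h z
  rw [← eval_polarizedNormSq, ← eval_polarizedNormSq, this]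

theorem sum_normSq_eval_mul_X [Fintype σ] (Q : ι → MvPolynomial σ ℂ) (z : σ → ℂ) :
    ∑ ki : ι × σ, Complex.normSq (eval z (Q ki.1 * X ki.2)) =
      (∑ k, Complex.normSq (eval z (Q k))) * ∑ i, Complex.normSq (z i) := by
  simp [Fintype.sum_prod_type, Finset.sum_mul_sum, Complex.normSq_mul]

end MvPolynomial

theorem LinearMap.range_eq_map_of_orthogonal_le_ker {𝕜 E M : Type*} [RCLike 𝕜]
    [NormedAddCommGroup E] [InnerProductSpace 𝕜 E] [AddCommGroup M] [Module 𝕜 M]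
    (T : E →ₗ[𝕜] M) (K : Submodule 𝕜 E) [K.HasOrthogonalProjection]
    (hK : Kᗮ ≤ LinearMap.ker T) : LinearMap.range T = K.map T := by
  rw [LinearMap.range_eq_map, ← K.sup_orthogonal_of_hasOrthogonalProjection, Submodule.map_sup,
    LinearMap.le_ker_iff_map.1 hK, sup_bot_eq]

section SpanOfPolarizedIdentity

variable {σ ι κ : Type*} [Fintype ι] [Fintype κ]

/-- With `T c = ∑ cₖ Aₖ` and `u w = conj (A(w))`, the identity gives `T (u w) ∈ span B`,
and `⟪u w, c⟫ = (T c)(w)` shows that the `u w` span `EuclideanSpace ℂ ι` modulo `ker T`. -/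
theorem span_range_le_of_sum_eval_mul_conj_eq (A : ι → MvPolynomial σ ℂ)
    (B : κ → MvPolynomial σ ℂ)
    (h : ∀ z w : σ → ℂ, ∑ k, eval z (A k) * conj (eval w (A k)) =
      ∑ j, eval z (B j) * conj (eval w (B j))) :
    Submodule.span ℂ (Set.range A) ≤ Submodule.span ℂ (Set.range B) := by
  let T : EuclideanSpace ℂ ι →ₗ[ℂ] MvPolynomial σ ℂ :=
    Fintype.linearCombination ℂ A ∘ₗ (WithLp.linearEquiv 2 ℂ (ι → ℂ)).toLinearMap
  let u : (σ → ℂ) → EuclideanSpace ℂ ι := fun w => WithLp.toLp 2 fun k => conj (eval w (A k))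
  have eval_T : ∀ c z, eval z (T c) = ∑ k, c k * eval z (A k) := by
    intro c z
    simp [T, Fintype.linearCombination_apply, smul_eval]
  have T_u : ∀ w, T (u w) = ∑ j, conj (eval w (B j)) • B j := fun w =>
    MvPolynomial.funext fun z => by
      simpa only [eval_T, map_sum, smul_eval, mul_comm] using h z w
  have ker_T : (Submodule.span ℂ (Set.range u))ᗮ ≤ LinearMap.ker T := by
    intro c hc
    refine MvPolynomial.funext fun w => ?_
    have u_perp := Submodule.inner_right_of_mem_orthogonal
      (Submodule.subset_span (Set.mem_range_self w)) hc
    simpa [PiLp.inner_apply, u, eval_T, mul_comm] using u_perp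
  calc Submodule.span ℂ (Set.range A) = LinearMap.range T := by
        rw [LinearMap.range_comp_of_range_eq_top _ (LinearEquiv.range _),
          Fintype.range_linearCombination]
    _ = (Submodule.span ℂ (Set.range u)).map T := T.range_eq_map_of_orthogonal_le_ker _ ker_T
    _ ≤ Submodule.span ℂ (Set.range B) := by
        rw [Submodule.map_span, Submodule.span_le]
        rintro _ ⟨_, ⟨w, rfl⟩, rfl⟩
        rw [T_u]
        exact Submodule.sum_mem _ fun j _ => Submodule.smul_mem _ _ (Submodule.subset_span ⟨j, rfl⟩)

theorem span_range_eq_of_sum_normSq_eq (A : ι → MvPolynomial σ ℂ) (B : κ → MvPolynomial σ ℂ)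
    (h : ∀ z, ∑ k, Complex.normSq (eval z (A k)) = ∑ j, Complex.normSq (eval z (B j))) :
    Submodule.span ℂ (Set.range A) = Submodule.span ℂ (Set.range B) :=
  le_antisymm
    (span_range_le_of_sum_eval_mul_conj_eq A B (sum_eval_mul_conj_eq_of_sum_normSq_eq A B h))
    (span_range_le_of_sum_eval_mul_conj_eq B A
      (sum_eval_mul_conj_eq_of_sum_normSq_eq B A fun z => (h z).symm))

end SpanOfPolarizedIdentity

/-- Let `F`, `G`, `P` be polynomial mappings on `ℂⁿ` with
`‖P(z)‖² = (‖F(z)‖² − ‖G(z)‖²)·‖z‖²` for all `z ∈ ℂⁿ`, and let `r` be the linear rank of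
`P`.  Then `dim V_{F⊗z} − dim V_{G⊗z} ≤ r ≤ dim V_{F⊗z}`. -/
theorem rank_bounds_of_sos_identity {n pF pG pP : ℕ}
    (F : Fin pF → MvPolynomial (Fin n) ℂ) (G : Fin pG → MvPolynomial (Fin n) ℂ)
    (P : Fin pP → MvPolynomial (Fin n) ℂ)
    (h : ∀ z : Fin n → ℂ,
      ∑ k, Complex.normSq (MvPolynomial.eval z (P k)) =
        ((∑ j, Complex.normSq (MvPolynomial.eval z (F j))) -
            ∑ k, Complex.normSq (MvPolynomial.eval z (G k))) *
          ∑ i, Complex.normSq (z i))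
    (r : ℕ) (hr : r = Module.finrank ℂ (Submodule.span ℂ (Set.range P))) :
    Module.finrank ℂ
          (Submodule.span ℂ
            (Set.range fun ji : Fin pF × Fin n => F ji.1 * MvPolynomial.X ji.2)) -
        Module.finrank ℂ
          (Submodule.span ℂ
            (Set.range fun ki : Fin pG × Fin n => G ki.1 * MvPolynomial.X ki.2)) ≤ r ∧
      r ≤ Module.finrank ℂ
        (Submodule.span ℂ
          (Set.range fun ji : Fin pF × Fin n => F ji.1 * MvPolynomial.X ji.2)) := by
  set FX := fun ji : Fin pF × Fin n => F ji.1 * X ji.2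
  set GX := fun ki : Fin pG × Fin n => G ki.1 * X ki.2
  have span_eq : Submodule.span ℂ (Set.range P) ⊔ Submodule.span ℂ (Set.range GX) =
      Submodule.span ℂ (Set.range FX) := by
    rw [← Submodule.span_union, ← Set.Sum.elim_range]
    refine span_range_eq_of_sum_normSq_eq _ _ fun z => ?_
    rw [Fintype.sum_sum_type]
    simp only [Sum.elim_inl, Sum.elim_inr, FX, GX, sum_normSq_eval_mul_X, h]
    ring
  have {ι : Type} [Finite ι] (v : ι → MvPolynomial (Fin n) ℂ) :
      FiniteDimensional ℂ (Submodule.span ℂ (Set.range v)) :=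
    FiniteDimensional.span_of_finite ℂ (Set.finite_range v)
  have upper := Submodule.finrank_mono (le_sup_left.trans span_eq.le)
  have lower := Submodule.finrank_add_le_finrank_add_finrank
    (Submodule.span ℂ (Set.range P)) (Submodule.span ℂ (Set.range GX))
  rw [span_eq] at lower
  omega
end

section
/- Let F, G, P be polynomial mappings in z = (z¹, …, zⁿ) ∈ ℂⁿ such that ‖P(z)‖² = (‖F(z)‖² − ‖G(z)‖²)·‖z‖² for all z ∈ ℂⁿ. Then for every real t with 0 ≤ t ≤ 1 there exists a polynomial mapping P_t in z such that ‖P_t(z)‖² = (‖F(z)‖² − t·‖G(z)‖²)·‖z‖² for all z ∈ ℂⁿ. -/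
/-! Write `‖F(z)‖² = (1 - t)‖F(z)‖² + t‖F(z)‖²` and substitute the hypothesis into the second
term: `(‖F‖² - t‖G‖²)‖z‖² = (1 - t)‖F‖²‖z‖² + t‖P‖²`.  Both summands are squared norms of
polynomial mappings, namely of `√(1 - t) (F ⊗ z)` and of `√t P`, and concatenating the two
mappings adds their squared norms. -/

namespace MvPolynomial

variable {σ ι κ : Type*} [Fintype ι] [Fintype κ]

noncomputable def evalNormSq (Q : ι → MvPolynomial σ ℂ) (z : σ → ℂ) : ℝ :=
  ∑ k, Complex.normSq (eval z (Q k))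

theorem evalNormSq_comp_equiv (Q : ι → MvPolynomial σ ℂ) (e : κ ≃ ι) (z : σ → ℂ) :
    evalNormSq (Q ∘ e) z = evalNormSq Q z :=
  e.sum_comp fun k => Complex.normSq (eval z (Q k))

theorem exists_fin_evalNormSq_eq (Q : ι → MvPolynomial σ ℂ) :
    ∃ (m : ℕ) (Q' : Fin m → MvPolynomial σ ℂ), ∀ z, evalNormSq Q' z = evalNormSq Q z :=
  ⟨Fintype.card ι, Q ∘ (Fintype.equivFin ι).symm, evalNormSq_comp_equiv Q _⟩

theorem evalNormSq_sumElim (Q : ι → MvPolynomial σ ℂ) (R : κ → MvPolynomial σ ℂ)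
    (z : σ → ℂ) : evalNormSq (Sum.elim Q R) z = evalNormSq Q z + evalNormSq R z :=
  Fintype.sum_sum_type _

theorem evalNormSq_C_mul (c : ℂ) (Q : ι → MvPolynomial σ ℂ) (z : σ → ℂ) :
    evalNormSq (fun k => C c * Q k) z = Complex.normSq c * evalNormSq Q z := by
  simp only [evalNormSq, eval_mul, eval_C, Complex.normSq_mul, Finset.mul_sum]

theorem evalNormSq_mul_X [Fintype σ] (F : ι → MvPolynomial σ ℂ) (z : σ → ℂ) :
    evalNormSq (fun p : ι × σ => F p.1 * X p.2) z =
      evalNormSq F z * ∑ i, Complex.normSq (z i) := by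
  simp only [evalNormSq, eval_mul, eval_X, Complex.normSq_mul, Fintype.sum_prod_type,
    Finset.sum_mul_sum]

theorem evalNormSq_C_sqrt_mul {a : ℝ} (ha : 0 ≤ a) (Q : ι → MvPolynomial σ ℂ) (z : σ → ℂ) :
    evalNormSq (fun k => C (√a : ℂ) * Q k) z = a * evalNormSq Q z := by
  rw [evalNormSq_C_mul, Complex.normSq_ofReal, Real.mul_self_sqrt ha]

end MvPolynomial

open MvPolynomial in
/-- Let `F`, `G`, `P` be polynomial mappings on `ℂⁿ` with
`‖P(z)‖² = (‖F(z)‖² − ‖G(z)‖²)·‖z‖²` for all `z ∈ ℂⁿ`.  Then for every real `t ∈ [0,1]`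
there is a polynomial mapping `P_t` with `‖P_t(z)‖² = (‖F(z)‖² − t·‖G(z)‖²)·‖z‖²` for all
`z ∈ ℂⁿ`. -/
theorem sos_family_of_sos_identity {n pF pG pP : ℕ}
    (F : Fin pF → MvPolynomial (Fin n) ℂ) (G : Fin pG → MvPolynomial (Fin n) ℂ)
    (P : Fin pP → MvPolynomial (Fin n) ℂ)
    (h : ∀ z : Fin n → ℂ,
      ∑ k, Complex.normSq (MvPolynomial.eval z (P k)) =
        ((∑ j, Complex.normSq (MvPolynomial.eval z (F j))) -
            ∑ k, Complex.normSq (MvPolynomial.eval z (G k))) *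
          ∑ i, Complex.normSq (z i)) :
    ∀ t : ℝ, 0 ≤ t → t ≤ 1 →
      ∃ (m : ℕ) (Pt : Fin m → MvPolynomial (Fin n) ℂ),
        ∀ z : Fin n → ℂ,
          ∑ k, Complex.normSq (MvPolynomial.eval z (Pt k)) =
            ((∑ j, Complex.normSq (MvPolynomial.eval z (F j))) -
                t * ∑ k, Complex.normSq (MvPolynomial.eval z (G k))) *
              ∑ i, Complex.normSq (z i) := by
  intro t ht0 ht1
  let Fz : Fin pF × Fin n → MvPolynomial (Fin n) ℂ := fun p => F p.1 * X p.2
  obtain ⟨m, Pt, hPt⟩ := exists_fin_evalNormSq_eq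
    (Sum.elim (fun p => C (√(1 - t) : ℂ) * Fz p) (fun k => C (√t : ℂ) * P k))
  refine ⟨m, Pt, fun z => ?_⟩
  change evalNormSq Pt z = (evalNormSq F z - t * evalNormSq G z) * ∑ i, Complex.normSq (z i)
  have hP : evalNormSq P z = (evalNormSq F z - evalNormSq G z) * ∑ i, Complex.normSq (z i) :=
    h z
  rw [hPt, evalNormSq_sumElim, evalNormSq_C_sqrt_mul (by linarith), evalNormSq_mul_X,
    evalNormSq_C_sqrt_mul ht0, hP]
  ring
end

section
/- Let n ≥ 2 and l₀ ≥ 2 be integers, let d₁ = 0 ≤ d₂ ≤ ⋯ ≤ d_{l₀} = d be integers, and let k₂, …, k_{l₀} be integers with 0 ≤ k_l ≤ n − 1 such that Σ_{j=0}^{k_l − 1}(n − j) ≤ d_l − d_{l−1} for each l = 2, …, l₀. Set k := Σ_{l=2}^{l₀} k_l and assume k < n. Then Σ_{i=0}^{k−1}(n − i) ≤ d; consequently, if moreover d ≤ Σ_{i=0}^{κ−1}(n − i) − 1 for some integer κ ≥ 1, then k ≤ κ − 1. -/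
/-!
Write `S m = Σ_{i<m} (n - i)`. Since the summands decrease, `S` is subadditive, so the
telescoping bounds `S (k_l) ≤ d_l - d_{l-1}` add up to `S (Σ k_l) ≤ d_{l₀} - d₁ = d`.
For `m ≤ n` the summands are nonnegative, so `S` is monotone there, and
`S k ≤ d < S κ` forces `k < κ`.
-/

open Finset

variable {M : Type*}

theorem Finset.sum_range_add_le_of_antitone [AddCommMonoid M] [PartialOrder M]
    [IsOrderedAddMonoid M] {f : ℕ → M} (hf : Antitone f) (a b : ℕ) :
    ∑ i ∈ range (a + b), f i ≤ ∑ i ∈ range a, f i + ∑ i ∈ range b, f i := by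
  rw [sum_range_add]
  gcongr with j
  exact hf (Nat.le_add_left j a)

theorem sum_Ioc_le_sub_of_subadditive [AddCommGroup M] [PartialOrder M] [IsOrderedAddMonoid M]
    {g : ℕ → M} (hg0 : g 0 ≤ 0) (hg : ∀ a b, g (a + b) ≤ g a + g b) {d : ℕ → M} {k : ℕ → ℕ}
    {a m : ℕ} (ham : a ≤ m) (hk : ∀ l ∈ Ioc a m, g (k l) ≤ d l - d (l - 1)) :
    g (∑ l ∈ Ioc a m, k l) ≤ d m - d a := by
  induction m, ham using Nat.le_induction with
  | base => simpa using hg0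
  | succ m ham ih =>
    have ih := ih fun l hl => hk l (Ioc_subset_Ioc_right m.le_succ hl)
    have hlast := hk (m + 1) (right_mem_Ioc.mpr (Nat.lt_succ_of_le ham))
    rw [Nat.add_sub_cancel] at hlast
    calc g (∑ l ∈ Ioc a (m + 1), k l)
        ≤ g (∑ l ∈ Ioc a m, k l) + g (k (m + 1)) := by rw [sum_Ioc_succ_top ham]; exact hg _ _
      _ ≤ (d m - d a) + (d (m + 1) - d m) := add_le_add ih hlast
      _ = d (m + 1) - d a := by abel

theorem telescoping_degeneracy_estimate_general (n l₀ : ℕ) (hl₀ : 2 ≤ l₀)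
    (d : ℕ → ℤ) (hd1 : d 1 = 0)
    (k : ℕ → ℕ)
    (hkd : ∀ l : ℕ, 2 ≤ l → l ≤ l₀ →
      (∑ j ∈ Finset.range (k l), ((n : ℤ) - j)) ≤ d l - d (l - 1))
    (K : ℕ) (hK : K = ∑ l ∈ Finset.Icc 2 l₀, k l) (hKn : K < n) :
    (∑ i ∈ Finset.range K, ((n : ℤ) - i)) ≤ d l₀ ∧
      ∀ κ : ℕ, 1 ≤ κ →
        d l₀ ≤ (∑ i ∈ Finset.range κ, ((n : ℤ) - i)) - 1 → K ≤ κ - 1 := by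
  set S : ℕ → ℤ := fun m => ∑ i ∈ range m, ((n : ℤ) - i)
  have hS_subadd : ∀ a b, S (a + b) ≤ S a + S b :=
    sum_range_add_le_of_antitone fun i j hij => by omega
  have hS_mono : ∀ {a b}, a ≤ b → b ≤ n → S a ≤ S b := fun hab hbn =>
    sum_le_sum_of_subset_of_nonneg (range_subset_range.mpr hab) fun i hi _ => by
      simp only [mem_range] at hi; omega
  have hSK : S K ≤ d l₀ := by
    have hIcc : Icc 2 l₀ = Ioc 1 l₀ := Icc_add_one_left_eq_Ioc 1 l₀
    have := sum_Ioc_le_sub_of_subadditive (by simp [S]) hS_subadd (by omega : 1 ≤ l₀)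
      fun l hl => by rw [mem_Ioc] at hl; exact hkd l (by omega) hl.2
    rwa [← hIcc, ← hK, hd1, sub_zero] at this
  refine ⟨hSK, fun κ _ hκ => ?_⟩
  change d l₀ ≤ S κ - 1 at hκ
  by_contra! hKκ
  have := hS_mono (show κ ≤ K by omega) hKn.le
  omega

/-- Let `n ≥ 2` and `l₀ ≥ 2` be integers, let `d₁ = 0 ≤ d₂ ≤ ⋯ ≤ d_{l₀} = d` be integers,
and let `k₂, …, k_{l₀}` be integers with `0 ≤ k_l ≤ n − 1` such that
`Σ_{j=0}^{k_l−1}(n−j) ≤ d_l − d_{l−1}` for each `l = 2, …, l₀`.  Set `k := Σ_{l=2}^{l₀} k_l`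
and assume `k < n`.  Then `Σ_{i=0}^{k−1}(n−i) ≤ d`; consequently, if moreover
`d ≤ Σ_{i=0}^{κ−1}(n−i) − 1` for some integer `κ ≥ 1`, then `k ≤ κ − 1`. -/
theorem telescoping_degeneracy_estimate (n l₀ : ℕ) (hn : 2 ≤ n) (hl₀ : 2 ≤ l₀)
    (d : ℕ → ℤ) (hd1 : d 1 = 0)
    (hmono : ∀ l : ℕ, 1 ≤ l → l + 1 ≤ l₀ → d l ≤ d (l + 1))
    (k : ℕ → ℕ) (hkle : ∀ l : ℕ, 2 ≤ l → l ≤ l₀ → k l ≤ n - 1)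
    (hkd : ∀ l : ℕ, 2 ≤ l → l ≤ l₀ →
      (∑ j ∈ Finset.range (k l), ((n : ℤ) - j)) ≤ d l - d (l - 1))
    (K : ℕ) (hK : K = ∑ l ∈ Finset.Icc 2 l₀, k l) (hKn : K < n) :
    (∑ i ∈ Finset.range K, ((n : ℤ) - i)) ≤ d l₀ ∧
      ∀ κ : ℕ, 1 ≤ κ →
        d l₀ ≤ (∑ i ∈ Finset.range κ, ((n : ℤ) - i)) - 1 → K ≤ κ - 1 :=
  telescoping_degeneracy_estimate_general n l₀ hl₀ d hd1 k hkd K hK hKn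
end

section
/- Let P and F be polynomial mappings in z = (z¹, …, zⁿ) ∈ ℂⁿ such that ‖P(z)‖² = ‖F(z)‖²·‖z‖² for all z ∈ ℂⁿ. Let κ denote the linear rank of F and r the linear rank of P. Then V_P = V_{F⊗z}; in particular r ≤ κ·n, and if moreover κ ≤ n, then n·κ − κ(κ−1)/2 ≤ r ≤ κ·n. (Grundmeier–Halfpap theorem: the SOS Conjecture in the case where the Hermitian multiplier is itself a sum of squares.) -/
/-!
`‖P(z)‖²` is the restriction to the totally real antidiagonal `w = z̄` of the polynomial
`H_P(z, w) = ∑ₖ Pₖ(z) P̄ₖ(w)` (`P̄ₖ` with conjugated coefficients), so it determines `H_P`, and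
`V_P` is spanned by the slices `H_P(·, w̄)`. As `‖F(z)‖² ‖z‖² = ‖(F ⊗ z)(z)‖²`, this gives
`V_P = V_{F⊗z}`, and `r ≤ κ n` is then clear.

For the lower bound fix a monomial order. The leading exponents of the nonzero elements of a space
of polynomials are as many as its dimension. Those of `V_F` form a set `D` of `κ` multi-indices, and
every `d + eᵢ` with `d ∈ D` is a leading exponent of `V_{F⊗z}`. Two distinct `d, d' ∈ D` have at
most one common shift `d + eᵢ = d' + eⱼ`, so there are at least `nκ - κ(κ-1)/2` such exponents.
-/

noncomputable section

open MvPolynomial Set Submodule ComplexConjugate Complex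

section Polarization

variable {σ : Type*}

theorem MvPolynomial.eq_zero_of_eval_sum_elim_conj_eq_zero (K : MvPolynomial (σ ⊕ σ) ℂ)
    (h : ∀ z : σ → ℂ, eval (Sum.elim z (conj ∘ z)) K = 0) : K = 0 := by
  -- `(z, z̄) = (x + i y, x - i y)` is an invertible linear change of variables taking the real
  -- points `(x, y)` onto the antidiagonal.
  set u : σ ⊕ σ → MvPolynomial (σ ⊕ σ) ℂ :=
    Sum.elim (fun j => X (.inl j) + C I * X (.inr j)) (fun j => X (.inl j) - C I * X (.inr j))
  have eval_bind₁_u : ∀ x, eval x (bind₁ u K) =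
      eval (Sum.elim (fun j => x (.inl j) + I * x (.inr j))
        (fun j => x (.inl j) - I * x (.inr j))) K := by
    intro x
    refine (eval₂Hom_bind₁ (RingHom.id ℂ) x u K).trans
      (congrArg (eval · K) (_root_.funext fun s => ?_))
    cases s <;> simp [u]
  have hreal : bind₁ u K = 0 := by
    refine funext_set (fun _ => range ofReal)
      (fun _ => infinite_range_of_injective ofReal_injective) fun x hx => ?_
    choose y hy using fun s => hx s trivial
    rw [eval_bind₁_u, map_zero, ← h fun j => x (.inl j) + I * x (.inr j)]
    refine congrArg (eval · K) (_root_.funext fun s => ?_)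
    cases s <;> simp [← hy, sub_eq_add_neg]
  refine MvPolynomial.funext fun v => ?_
  have hv := eval_bind₁_u (Sum.elim (fun j => (v (.inl j) + v (.inr j)) / 2)
    (fun j => (v (.inl j) - v (.inr j)) / (2 * I)))
  rw [hreal, map_zero] at hv
  rw [map_zero, hv]
  refine congrArg (eval · K) (_root_.funext fun s => ?_)
  cases s <;> · simp only [Sum.elim_inl, Sum.elim_inr]; field_simp; ring

theorem MvPolynomial.conj_eval (w : σ → ℂ) (p : MvPolynomial σ ℂ) :
    conj (eval w p) = eval (conj ∘ w) (map (starRingEnd ℂ) p) := by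
  rw [eval_map, eval₂_comp]

variable {ι : Type*} [Fintype ι]

def hermitianNormSq (P : ι → MvPolynomial σ ℂ) : MvPolynomial (σ ⊕ σ) ℂ :=
  ∑ k, rename Sum.inl (P k) * rename Sum.inr (map (starRingEnd ℂ) (P k))

theorem eval_hermitianNormSq (P : ι → MvPolynomial σ ℂ) (z : σ → ℂ) :
    eval (Sum.elim z (conj ∘ z)) (hermitianNormSq P) = ∑ k, (normSq (eval z (P k)) : ℂ) := by
  simp only [hermitianNormSq, map_sum, map_mul, eval_rename, Sum.elim_comp_inl,
    Sum.elim_comp_inr, ← conj_eval, mul_conj]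

theorem aeval_hermitianNormSq (P : ι → MvPolynomial σ ℂ) (w : σ → ℂ) :
    aeval (Sum.elim X (C ∘ conj ∘ w) : σ ⊕ σ → MvPolynomial σ ℂ) (hermitianNormSq P) =
      ∑ k, conj (eval w (P k)) • P k := by
  rw [hermitianNormSq, map_sum]
  refine Finset.sum_congr rfl fun k _ => ?_
  rw [map_mul, aeval_rename, aeval_rename, Sum.elim_comp_inl, Sum.elim_comp_inr, aeval_X_left_apply,
    conj_eval, mul_comm, smul_eq_C_mul, eval₂_comp]
  rfl

theorem span_range_eq_span_range_sum_conj_smul {M W : Type*} [AddCommGroup M] [Module ℂ M]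
    (P : ι → M) (φ : W → M →ₗ[ℂ] ℂ) (hφ : ∀ p, (∀ w, φ w p = 0) → p = 0) :
    span ℂ (range P) = span ℂ (range fun w => ∑ k, conj (φ w (P k)) • P k) := by
  let L : EuclideanSpace ℂ ι →ₗ[ℂ] M :=
    Fintype.linearCombination ℂ P ∘ₗ (WithLp.linearEquiv 2 ℂ (ι → ℂ)).toLinearMap
  let v : W → EuclideanSpace ℂ ι := fun w => WithLp.toLp 2 fun k => conj (φ w (P k))
  have inner_v : ∀ w c, inner ℂ (v w) c = φ w (L c) := by
    intro w c
    simp [L, v, PiLp.inner_apply, Fintype.linearCombination_apply]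
  have orthogonal_le_ker : (span ℂ (range v))ᗮ ≤ LinearMap.ker L := fun c hc =>
    hφ _ fun w => (inner_v w c).symm.trans
      ((mem_orthogonal _ _).mp hc _ (subset_span (mem_range_self w)))
  calc span ℂ (range P) = LinearMap.range L := by
        rw [LinearMap.range_comp_of_range_eq_top _ (LinearEquiv.range _),
          Fintype.range_linearCombination]
    _ = map L (span ℂ (range v)) := by
        rw [LinearMap.range_eq_map, ← (span ℂ (range v)).sup_orthogonal_of_hasOrthogonalProjection,
          Submodule.map_sup, LinearMap.le_ker_iff_map.mp orthogonal_le_ker, sup_bot_eq]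
    _ = _ := by
        rw [map_span, ← range_comp]
        rfl

theorem span_eq_of_sum_normSq_eq {ι' : Type*} [Fintype ι'] (P : ι → MvPolynomial σ ℂ)
    (Q : ι' → MvPolynomial σ ℂ)
    (h : ∀ z, ∑ k, normSq (eval z (P k)) = ∑ l, normSq (eval z (Q l))) :
    span ℂ (range P) = span ℂ (range Q) := by
  have hPQ : hermitianNormSq P = hermitianNormSq Q := by
    rw [← sub_eq_zero]
    refine eq_zero_of_eval_sum_elim_conj_eq_zero _ fun z => ?_
    rw [map_sub, eval_hermitianNormSq, eval_hermitianNormSq, ← ofReal_sum, ← ofReal_sum, h,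
      sub_self]
  have separating : ∀ p : MvPolynomial σ ℂ, (∀ w : σ → ℂ, (aeval w).toLinearMap p = 0) → p = 0 :=
    fun p hp => MvPolynomial.funext fun w => by simpa using hp w
  rw [span_range_eq_span_range_sum_conj_smul P _ separating,
    span_range_eq_span_range_sum_conj_smul Q _ separating]
  congr 2
  ext1 w
  change ∑ k, conj (eval w (P k)) • P k = ∑ l, conj (eval w (Q l)) • Q l
  rw [← aeval_hermitianNormSq, hPQ, aeval_hermitianNormSq]

end Polarization

section LeadingExponents

variable {σ R K : Type*}

theorem MonomialOrder.linearIndependent_of_injective_degree [CommRing R] [NoZeroDivisors R]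
    (m : MonomialOrder σ) {ι : Type*} {g : ι → MvPolynomial σ R} (hg : ∀ i, g i ≠ 0)
    (hinj : Function.Injective (m.degree ∘ g)) : LinearIndependent R g := by
  classical
  rw [linearIndependent_iff']
  intro s
  induction s using Finset.induction_on_max_value (m.toSyn ∘ m.degree ∘ g) with
  | empty => simp
  | insert a s ha hmax ih =>
    intro c hc
    have lower_coeff : ∀ i ∈ s, (g i).coeff (m.degree (g a)) = 0 := fun i hi =>
      m.coeff_eq_zero_of_lt <| (hmax i hi).lt_of_ne fun h =>
        ha (hinj (m.toSyn.injective h) ▸ hi)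
    have hca : c a = 0 := by
      have := congrArg (coeff (m.degree (g a))) hc
      rw [Finset.sum_insert ha, coeff_add, coeff_sum, Finset.sum_eq_zero fun i hi => by
        rw [coeff_smul, lower_coeff i hi, smul_zero]] at this
      simpa [m.coeff_degree_ne_zero_iff.mpr (hg a)] using this
    rw [Finset.sum_insert ha, hca, zero_smul, zero_add] at hc
    intro i hi
    rcases Finset.mem_insert.mp hi with rfl | hi
    exacts [hca, ih c hc i hi]

variable [Field K] (m : MonomialOrder σ) (V : Submodule K (MvPolynomial σ K))

def MonomialOrder.leadingExponents : Set (σ →₀ ℕ) :=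
  m.degree '' {p | p ∈ V ∧ p ≠ 0}

theorem MonomialOrder.card_le_finrank_of_subset_leadingExponents [FiniteDimensional K V]
    {T : Finset (σ →₀ ℕ)} (hT : ↑T ⊆ m.leadingExponents V) : T.card ≤ Module.finrank K V := by
  choose p hp using fun t : T => hT t.2
  let g : T → V := fun t => ⟨p t, (hp t).1.1⟩
  have hg : LinearIndependent K (V.subtype ∘ g) :=
    m.linearIndependent_of_injective_degree (fun t => (hp t).1.2)
      fun s t hst => Subtype.ext ((hp s).2.symm.trans (hst.trans (hp t).2))
  simpa using hg.of_comp.fintype_card_le_finrank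

theorem MonomialOrder.finite_leadingExponents [FiniteDimensional K V] :
    (m.leadingExponents V).Finite := by
  by_contra hinf
  obtain ⟨T, hT, hcard⟩ := Set.Infinite.exists_subset_card_eq hinf (Module.finrank K V + 1)
  have := m.card_le_finrank_of_subset_leadingExponents V hT
  omega

theorem MonomialOrder.finrank_le_card_of_leadingExponents_subset {T : Finset (σ →₀ ℕ)}
    (hT : m.leadingExponents V ⊆ T) : Module.finrank K V ≤ T.card := by
  let coeffs : V →ₗ[K] T → K := LinearMap.pi fun t => lcoeff K (t : σ →₀ ℕ) ∘ₗ V.subtype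
  have hinj : Function.Injective coeffs := by
    rw [← LinearMap.ker_eq_bot, Submodule.eq_bot_iff]
    intro p hp
    by_contra hp0
    have hmem : m.degree (p : MvPolynomial σ K) ∈ T :=
      hT ⟨p, ⟨p.2, by simpa using hp0⟩, rfl⟩
    have hcoeff := congrFun (LinearMap.mem_ker.mp hp) ⟨_, hmem⟩
    exact hp0 (by simpa [coeffs, m.coeff_degree_eq_zero_iff] using hcoeff)
  simpa using LinearMap.finrank_le_finrank_of_injective hinj

theorem MonomialOrder.ncard_leadingExponents [FiniteDimensional K V] :
    (m.leadingExponents V).ncard = Module.finrank K V := by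
  have hfin := m.finite_leadingExponents V
  rw [Set.ncard_eq_toFinset_card _ hfin]
  exact le_antisymm (m.card_le_finrank_of_subset_leadingExponents V (by simp))
    (m.finrank_le_card_of_leadingExponents_subset V (by simp))

end LeadingExponents

section UnitShifts

variable {σ : Type*} [Fintype σ] [DecidableEq σ]

def Finsupp.unitShifts (d : σ →₀ ℕ) : Finset (σ →₀ ℕ) :=
  Finset.univ.image fun i => d + Finsupp.single i 1

theorem Finsupp.card_unitShifts (d : σ →₀ ℕ) : (unitShifts d).card = Fintype.card σ := by
  rw [unitShifts, Finset.card_image_of_injective _ fun i j hij =>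
    Finsupp.single_left_injective one_ne_zero (add_left_cancel hij), Finset.card_univ]

theorem Finsupp.card_unitShifts_inter_le_one {d d' : σ →₀ ℕ} (hd : d ≠ d') :
    (unitShifts d ∩ unitShifts d').card ≤ 1 := by
  refine Finset.card_le_one.mpr fun x hx y hy => ?_
  simp only [unitShifts, Finset.mem_inter, Finset.mem_image, Finset.mem_univ, true_and] at hx hy
  obtain ⟨⟨i, rfl⟩, j, hj⟩ := hx
  obtain ⟨⟨i', rfl⟩, j', hj'⟩ := hy
  have : single i 1 + single j' 1 = single i' 1 + single j (1 : ℕ) :=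
    add_left_cancel (a := d) (by rw [← add_assoc, ← add_assoc, ← hj', ← hj]; abel)
  rcases (single_add_single_eq_single_add_single one_ne_zero one_ne_zero).mp this with
    ⟨rfl, -⟩ | ⟨-, rfl, -⟩ | ⟨h, -⟩
  · rfl
  · exact absurd (add_right_cancel hj).symm hd
  · exact absurd h (by norm_num)

theorem Finsupp.card_mul_le_card_biUnion_unitShifts_add_choose_two (D : Finset (σ →₀ ℕ)) :
    Fintype.card σ * D.card ≤ (D.biUnion unitShifts).card + D.card.choose 2 := by
  induction D using Finset.induction_on with
  | empty => simp
  | insert d D hd ih =>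
    have overlap : (unitShifts d ∩ D.biUnion unitShifts).card ≤ D.card := by
      rw [Finset.inter_biUnion]
      refine Finset.card_biUnion_le.trans ?_
      simpa using Finset.sum_le_sum fun d' hd' =>
        card_unitShifts_inter_le_one (ne_of_mem_of_not_mem hd' hd).symm
    have := Finset.card_union_add_card_inter (unitShifts d) (D.biUnion unitShifts)
    rw [card_unitShifts] at this
    rw [Finset.biUnion_insert, Finset.card_insert_of_notMem hd, Nat.choose_succ_succ',
      Nat.choose_one_right, mul_add_one]
    linarith

end UnitShifts

section MulVariables

variable {σ K ι : Type*} [Field K]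

theorem mul_X_mem_span_mul_X {F : ι → MvPolynomial σ K} {p : MvPolynomial σ K}
    (hp : p ∈ span K (range F)) (i : σ) :
    p * X i ∈ span K (range fun ji : ι × σ => F ji.1 * X ji.2) := by
  induction hp using Submodule.span_induction with
  | mem x hx =>
    obtain ⟨j, rfl⟩ := hx
    exact subset_span ⟨(j, i), rfl⟩
  | zero => simp
  | add x y _ _ hx hy => simpa [add_mul] using add_mem hx hy
  | smul c x _ hx => simpa [smul_mul_assoc] using smul_mem _ c hx

theorem finrank_span_mul_X_le [Fintype σ] [Finite ι] (F : ι → MvPolynomial σ K) :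
    Module.finrank K (span K (range fun ji : ι × σ => F ji.1 * X ji.2)) ≤
      Module.finrank K (span K (range F)) * Fintype.card σ := by
  classical
  set V := span K (range F)
  have : FiniteDimensional K V := FiniteDimensional.span_of_finite K (finite_range F)
  let Φ : (σ → V) →ₗ[K] MvPolynomial σ K :=
    LinearMap.lsum K (fun _ => V) K fun i => LinearMap.mulRight K (X i) ∘ₗ V.subtype
  have hle : span K (range fun ji : ι × σ => F ji.1 * X ji.2) ≤ LinearMap.range Φ := by
    rw [span_le]
    rintro _ ⟨⟨j, i⟩, rfl⟩
    refine ⟨Pi.single i ⟨F j, subset_span ⟨j, rfl⟩⟩, ?_⟩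
    simp [Φ, Pi.single_apply, apply_ite]
  calc _ ≤ Module.finrank K (LinearMap.range Φ) := Submodule.finrank_mono hle
    _ ≤ Module.finrank K (σ → V) := LinearMap.finrank_range_le Φ
    _ = _ := by simp [Module.finrank_pi_fintype, mul_comm]

theorem card_mul_finrank_le_finrank_span_mul_X_add_choose_two [Fintype σ] [LinearOrder σ]
    [Finite ι] (F : ι → MvPolynomial σ K) :
    Fintype.card σ * Module.finrank K (span K (range F)) ≤
      Module.finrank K (span K (range fun ji : ι × σ => F ji.1 * X ji.2)) +
        (Module.finrank K (span K (range F))).choose 2 := by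
  let m : MonomialOrder σ := MonomialOrder.lex
  set V := span K (range F)
  set W := span K (range fun ji : ι × σ => F ji.1 * X ji.2)
  have : FiniteDimensional K V := FiniteDimensional.span_of_finite K (finite_range F)
  have : FiniteDimensional K W := FiniteDimensional.span_of_finite K (finite_range _)
  set D := (m.finite_leadingExponents V).toFinset
  have hD : D.card = Module.finrank K V := by
    rw [← Set.ncard_eq_toFinset_card _ (m.finite_leadingExponents V), m.ncard_leadingExponents]
  have shifts_subset : ↑(D.biUnion Finsupp.unitShifts) ⊆ m.leadingExponents W := by
    intro x hx
    simp only [D, Finsupp.unitShifts, Finset.coe_biUnion, Set.Finite.coe_toFinset,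
      Finset.coe_image, Finset.coe_univ, image_univ, mem_iUnion, mem_range, exists_prop] at hx
    obtain ⟨_, ⟨p, ⟨hpV, hp0⟩, rfl⟩, i, rfl⟩ := hx
    refine ⟨p * X i, ⟨mul_X_mem_span_mul_X hpV i, mul_ne_zero hp0 (X_ne_zero i)⟩, ?_⟩
    rw [m.degree_mul hp0 (X_ne_zero i), m.degree_X]
  have := Finsupp.card_mul_le_card_biUnion_unitShifts_add_choose_two D
  rw [hD] at this
  linarith [m.card_le_finrank_of_subset_leadingExponents W shifts_subset]

end MulVariables

/-- **Grundmeier–Halfpap theorem** (the SOS Conjecture when the Hermitian multiplier is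
itself a sum of squares).  Let `P` and `F` be polynomial mappings on `ℂⁿ` with
`‖P(z)‖² = ‖F(z)‖²·‖z‖²` for all `z ∈ ℂⁿ`.  Let `κ` be the linear rank of `F` and `r` the
linear rank of `P`.  Then `V_P = V_{F⊗z}`; in particular `r ≤ κ·n`, and if moreover
`κ ≤ n`, then `n·κ − κ(κ−1)/2 ≤ r ≤ κ·n`. -/
theorem grundmeier_halfpap {n pP m : ℕ}
    (P : Fin pP → MvPolynomial (Fin n) ℂ) (F : Fin m → MvPolynomial (Fin n) ℂ)
    (h : ∀ z : Fin n → ℂ,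
      ∑ k, Complex.normSq (MvPolynomial.eval z (P k)) =
        (∑ j, Complex.normSq (MvPolynomial.eval z (F j))) * ∑ i, Complex.normSq (z i))
    (κ r : ℕ)
    (hκ : κ = Module.finrank ℂ (Submodule.span ℂ (Set.range F)))
    (hr : r = Module.finrank ℂ (Submodule.span ℂ (Set.range P))) :
    Submodule.span ℂ (Set.range P) =
      Submodule.span ℂ
        (Set.range fun ji : Fin m × Fin n => F ji.1 * MvPolynomial.X ji.2) ∧
    r ≤ κ * n ∧
    (κ ≤ n → n * κ - κ * (κ - 1) / 2 ≤ r ∧ r ≤ κ * n) := by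
  have hspan : span ℂ (range P) = span ℂ (range fun ji : Fin m × Fin n => F ji.1 * X ji.2) := by
    refine span_eq_of_sum_normSq_eq P _ fun z => ?_
    simp only [h z, Fintype.sum_prod_type, Finset.sum_mul_sum, map_mul, eval_X]
  have hupper : r ≤ κ * n := by
    rw [hr, hspan, hκ]
    simpa using finrank_span_mul_X_le F
  have hlower := card_mul_finrank_le_finrank_span_mul_X_add_choose_two F
  rw [← hspan, ← hr, ← hκ, Fintype.card_fin, Nat.choose_two_right] at hlower
  exact ⟨hspan, hupper, fun _ => ⟨by omega, hupper⟩⟩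
end
end
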